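/- Let A ⊆ B be finitely generated integral domains over a field k of characteristic zero, with B integral over A, and let F be a family of k-derivations on B each of which maps A into A. If A is integrally closed in its fraction field, then B^F = ∩_{d∈F} ker(d|_B) is integral over A^F = ∩_{d∈F} ker(d|_A). -/

import Mathlib

/-- The kernel of a derivation, as a subalgebra. -/
def Derivation.kerSubalgebra {k B : Type*} [CommRing k] [CommRing B] [Algebra k B]
    (d : Derivation k B B) : Subalgebra k B where
  carrier := {x | d x = 0}
  mul_mem' := by
    intro a b ha hb
    simp only [Set.mem_setOf_eq] at *
    simp [d.leibniz, ha, hb]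
  add_mem' := by
    intro a b ha hb
    simp only [Set.mem_setOf_eq] at *
    simp [ha, hb]
  algebraMap_mem' := by
    intro r
    simp [Derivation.map_algebraMap]

/-! If `d x = 0`, applying `d` to the coefficients of the minimal polynomial `p` of `x` over `A`
gives a polynomial `pᵈ` with `pᵈ(x) = d(p(x)) = 0`, of smaller degree than `p` because `p` is
monic. Over the integrally closed domain `A`, `p` divides every polynomial vanishing at `x`, so
`pᵈ = 0`. Hence the coefficients of `p` lie in `A^F`, and `p` is an integral equation for `x`
over `A^F`. -/

open Polynomial

namespace Derivation

variable {k R S : Type*} [CommRing k] [CommRing R] [CommRing S] [Algebra k R] [Algebra k S]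

def restrictSubalgebra (d : Derivation k S S) (A : Subalgebra k S) (hA : ∀ a ∈ A, d a ∈ A) :
    Derivation k A A where
  toFun a := ⟨d a, hA a a.2⟩
  map_add' a b := Subtype.ext (d.map_add a b)
  map_smul' r a := Subtype.ext (d.map_smul r a)
  map_one_eq_zero' := Subtype.ext d.map_one_eq_zero
  leibniz' a b := Subtype.ext (d.leibniz a b)

variable (dR : Derivation k R R)

@[simp]
theorem coeff_equivPolynomial_mapCoeffs (p : R[X]) (i : ℕ) :
    (PolynomialModule.equivPolynomial (dR.mapCoeffs p)).coeff i = dR (p.coeff i) :=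
  rfl

theorem degree_mapCoeffs_lt [Nontrivial R] {p : R[X]} (hp : p.Monic) :
    (PolynomialModule.equivPolynomial (dR.mapCoeffs p)).degree < p.degree := by
  rw [degree_eq_natDegree hp.ne_zero, degree_lt_iff_coeff_zero]
  intro m hm
  rw [coeff_equivPolynomial_mapCoeffs]
  rcases (show p.natDegree ≤ m by exact_mod_cast hm).eq_or_lt with h | h
  · rw [← h, hp.coeff_natDegree, map_one_eq_zero]
  · rw [coeff_eq_zero_of_natDegree_lt h, map_zero]

variable [Algebra R S] (d : Derivation k S S)

theorem aeval_mapCoeffs_eq_apply_aeval (hd : ∀ r, d (algebraMap R S r) = algebraMap R S (dR r))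
    {x : S} (hx : d x = 0) (p : R[X]) :
    aeval x (PolynomialModule.equivPolynomial (dR.mapCoeffs p)) = d (aeval x p) := by
  rw [apply_aeval_eq' dR d (Algebra.linearMap R S) (fun a ↦ (hd a).symm), hx, smul_zero, add_zero,
    PolynomialModule.aeval_equivPolynomial]

theorem apply_coeff_minpoly_eq_zero [IsDomain R] [IsIntegrallyClosed R] [IsDomain S]
    [Module.IsTorsionFree R S] (hd : ∀ r, d (algebraMap R S r) = algebraMap R S (dR r))
    {x : S} (hxR : IsIntegral R x) (hx : d x = 0) (i : ℕ) :
    dR ((minpoly R x).coeff i) = 0 := by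
  have hdvd : minpoly R x ∣ PolynomialModule.equivPolynomial (dR.mapCoeffs (minpoly R x)) :=
    minpoly.isIntegrallyClosed_dvd hxR <| by
      rw [aeval_mapCoeffs_eq_apply_aeval dR d hd hx, minpoly.aeval, map_zero]
  simpa using congrArg (coeff · i)
    (eq_zero_of_dvd_of_degree_lt hdvd (degree_mapCoeffs_lt dR (minpoly.monic hxR)))

end Derivation

theorem IsIntegral.of_minpoly_coeff_mem {k R S : Type*} [CommRing k] [CommRing R] [CommRing S]
    [Nontrivial S] [Algebra R S] [Algebra k S] {T : Subalgebra k S} {x : S} (hx : IsIntegral R x)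
    (hT : ∀ i, algebraMap R S ((minpoly R x).coeff i) ∈ T) : IsIntegral T x := by
  refine .of_aeval_monic_of_isIntegral_coeff ((minpoly.monic hx).map (algebraMap R S)) ?_ ?_
    fun i ↦ ?_
  · rw [(minpoly.monic hx).natDegree_map]
    exact (minpoly.natDegree_pos hx).ne'
  · rw [eval_map_algebraMap, minpoly.aeval]
    exact isIntegral_zero
  · rw [coeff_map]
    exact isIntegral_algebraMap (R := T) (x := ⟨_, hT i⟩)

theorem fixed_ring_integral_of_normal
    (k B : Type*) [Field k] [CommRing B] [IsDomain B] [Algebra k B]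
    (A : Subalgebra k B)
    (hint : ∀ b : B, IsIntegral (↥A) b)
    [IsIntegrallyClosed ↥A]
    (F : Set (Derivation k B B))
    (hF : ∀ d ∈ F, ∀ a ∈ A, d a ∈ A)
    (x : B) (hx : ∀ d ∈ F, d x = 0) :
    IsIntegral (↥(A ⊓ ⨅ d ∈ F, Derivation.kerSubalgebra d)) x := by
  have hcoeff (i : ℕ) : ((minpoly A x).coeff i : B) ∈ A ⊓ ⨅ d ∈ F, d.kerSubalgebra := by
    simp only [Algebra.mem_inf, Algebra.mem_iInf]
    refine ⟨SetLike.coe_mem _, fun d hd ↦ ?_⟩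
    exact congrArg Subtype.val <| (d.restrictSubalgebra A (hF d hd)).apply_coeff_minpoly_eq_zero
      d (fun _ ↦ rfl) (hint x) (hx d hd) i
  exact (hint x).of_minpoly_coeff_mem hcoeff
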